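/- arXiv:1911.07210 — 8 statements merged into one kernel-verified Lean document; each statement's English description precedes it below -/
import Mathlib

section
/- Fix real numbers x, y with 0 ≤ y ≤ x ≤ 1 and q with 1/2 ≤ q ≤ 1. For every Borel probability measure μ on the real line with μ([0,1]) = 1, we have q·∫(u1t(θ) − u1a(θ)) dμ(θ) + (1−q)·∫(u2t(θ) − u2a(θ)) dμ(θ) ≥ 0. (This establishes that for two bidders the granularity threshold for a one-item-demand attacker is at most 1/2: for q ≥ 1/2 no false-name attack of the form (1,x),(1,y) is beneficial in expectation for a 1-type bidder, for any per-item value distribution.) -/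
open MeasureTheory

/-- A 1-type attacker of true value 1 in a two-item VCG auction with two bidders:
truthful utility minus attack utility, against a 1-type adversary of value θ. -/
noncomputable def u1t (θ : ℝ) : ℝ := 1

noncomputable def u1a (y θ : ℝ) : ℝ := if θ ≤ y then 1 - 2 * θ else 1 - y

noncomputable def u2t (θ : ℝ) : ℝ := if θ ≤ 1 / 2 then 1 - 2 * θ else 0

noncomputable def u2a (x y θ : ℝ) : ℝ :=
  if θ ≤ y / 2 then 1
  else if θ ≤ x / 2 then 1 - 2 * θ + y
  else if θ ≤ (x + y) / 2 then 1 - 4 * θ + y + x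
  else 0


/-!
Write `a θ = u1t θ - u1a y θ` and `b θ = u2t θ - u2a x y θ` for the attacker's gains from
bidding truthfully. Pointwise, `a θ ≥ 0` for `θ ≥ 0` and `a θ + b θ ≥ 0` for every `θ`, so for
`q ≥ 1/2` the integrand `q a + (1 - q) b = (1 - q) (a + b) + (2q - 1) a` is nonnegative on the
support `[0, 1]` of `μ`.
-/

open Set

lemma mul_add_one_sub_mul_nonneg {q a b : ℝ} (hq : 1 / 2 ≤ q) (hq1 : q ≤ 1) (ha : 0 ≤ a)
    (hab : 0 ≤ a + b) : 0 ≤ q * a + (1 - q) * b := by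
  have hdecomp : q * a + (1 - q) * b = (1 - q) * (a + b) + (2 * q - 1) * a := by ring
  rw [hdecomp]
  exact add_nonneg (mul_nonneg (by linarith) hab) (mul_nonneg (by linarith) ha)

lemma integrable_of_ae_mem_of_abs_le {α : Type*} [MeasurableSpace α] {μ : Measure α}
    [IsFiniteMeasure μ] {f : α → ℝ} {s : Set α} {C : ℝ} (hf : Measurable f)
    (hs : ∀ᵐ θ ∂μ, θ ∈ s) (hC : ∀ θ ∈ s, |f θ| ≤ C) : Integrable f μ :=
  .of_bound hf.aestronglyMeasurable C (hs.mono fun θ hθ => (Real.norm_eq_abs _).trans_le (hC θ hθ))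

section Utilities

variable {x y θ : ℝ}

lemma measurable_u1a : Measurable (u1a y) :=
  .ite measurableSet_Iic (by fun_prop) (by fun_prop)

lemma measurable_u2t : Measurable u2t :=
  .ite measurableSet_Iic (by fun_prop) (by fun_prop)

lemma measurable_u2a : Measurable (u2a x y) :=
  .ite measurableSet_Iic (by fun_prop)
    (.ite measurableSet_Iic (by fun_prop) (.ite measurableSet_Iic (by fun_prop) (by fun_prop)))

lemma u1t_sub_u1a_nonneg (hy : 0 ≤ y) (hθ : 0 ≤ θ) : 0 ≤ u1t θ - u1a y θ := by
  unfold u1t u1a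
  split_ifs <;> linarith

lemma u1t_sub_u1a_add_u2t_sub_u2a_nonneg (hy : 0 ≤ y) :
    0 ≤ (u1t θ - u1a y θ) + (u2t θ - u2a x y θ) := by
  unfold u1t u1a u2t u2a
  split_ifs <;> linarith

lemma abs_u1t_sub_u1a_le (hy : 0 ≤ y) (hθ : θ ∈ Icc 0 1) : |u1t θ - u1a y θ| ≤ 2 := by
  obtain ⟨h0, h1⟩ := hθ
  unfold u1t u1a
  rw [abs_le]
  split_ifs <;> constructor <;> linarith

lemma abs_u2t_sub_u2a_le (hy : 0 ≤ y) (hθ : θ ∈ Icc 0 1) : |u2t θ - u2a x y θ| ≤ 2 := by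
  obtain ⟨h0, h1⟩ := hθ
  unfold u2t u2a
  rw [abs_le]
  split_ifs <;> constructor <;> linarith

end Utilities

theorem stmt_0_general (x y q : ℝ) (hy : 0 ≤ y)
    (hq : 1 / 2 ≤ q) (hq1 : q ≤ 1)
    (μ : Measure ℝ) [IsProbabilityMeasure μ] (hμ : μ (Set.Icc 0 1) = 1) :
    q * (∫ θ, (u1t θ - u1a y θ) ∂μ) + (1 - q) * (∫ θ, (u2t θ - u2a x y θ) ∂μ) ≥ 0 := by
  have hIcc : ∀ᵐ θ ∂μ, θ ∈ Icc (0 : ℝ) 1 :=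
    mem_ae_iff.mpr ((prob_compl_eq_zero_iff measurableSet_Icc).mpr hμ)
  have hint1 : Integrable (fun θ => u1t θ - u1a y θ) μ :=
    integrable_of_ae_mem_of_abs_le (measurable_const.sub measurable_u1a) hIcc
      fun _ hθ => abs_u1t_sub_u1a_le hy hθ
  have hint2 : Integrable (fun θ => u2t θ - u2a x y θ) μ :=
    integrable_of_ae_mem_of_abs_le (measurable_u2t.sub measurable_u2a) hIcc
      fun _ hθ => abs_u2t_sub_u2a_le hy hθ
  rw [ge_iff_le, ← integral_const_mul, ← integral_const_mul,
    ← integral_add (hint1.const_mul q) (hint2.const_mul (1 - q))]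
  refine integral_nonneg_of_ae ?_
  filter_upwards [hIcc] with θ hθ
  exact mul_add_one_sub_mul_nonneg hq hq1 (u1t_sub_u1a_nonneg hy hθ.1)
    (u1t_sub_u1a_add_u2t_sub_u2a_nonneg hy)

theorem stmt_0 (x y q : ℝ) (hy : 0 ≤ y) (hyx : y ≤ x) (hx : x ≤ 1)
    (hq : 1 / 2 ≤ q) (hq1 : q ≤ 1)
    (μ : Measure ℝ) [IsProbabilityMeasure μ] (hμ : μ (Set.Icc 0 1) = 1) :
    q * (∫ θ, (u1t θ - u1a y θ) ∂μ) + (1 - q) * (∫ θ, (u2t θ - u2a x y θ) ∂μ) ≥ 0 :=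
  stmt_0_general x y q hy hq hq1 μ hμ
end

section
/- For all real numbers x, y, θ with 0 ≤ y ≤ x ≤ 1 and 0 ≤ θ ≤ 1, the pointwise inequality (u1t(θ) − u1a(θ)) + (u2t(θ) − u2a(θ)) ≥ 0 holds. -/
lemma min_le_u1t_sub_u1a (y θ : ℝ) : min (2 * θ) y ≤ u1t θ - u1a y θ := by
  unfold u1t u1a
  split_ifs
  · linarith [min_le_left (2 * θ) y]
  · linarith [min_le_right (2 * θ) y]

lemma neg_min_le_u2t_sub_u2a {x y : ℝ} (hy : 0 ≤ y) (hyx : y ≤ x) (hx : x ≤ 1) (θ : ℝ) :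
    -min (2 * θ) y ≤ u2t θ - u2a x y θ := by
  unfold u2t u2a
  rcases min_cases (2 * θ) y with ⟨hmin, _⟩ | ⟨hmin, _⟩ <;> rw [hmin] <;> split_ifs <;> linarith

theorem stmt_1_general (x y θ : ℝ) (hy : 0 ≤ y) (hyx : y ≤ x) (hx : x ≤ 1) :
    (u1t θ - u1a y θ) + (u2t θ - u2a x y θ) ≥ 0 := by
  linarith [min_le_u1t_sub_u1a y θ, neg_min_le_u2t_sub_u2a hy hyx hx θ]

theorem stmt_1 (x y θ : ℝ) (hy : 0 ≤ y) (hyx : y ≤ x) (hx : x ≤ 1)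
    (hθ0 : 0 ≤ θ) (hθ1 : θ ≤ 1) :
    (u1t θ - u1a y θ) + (u2t θ - u2a x y θ) ≥ 0 :=
  stmt_1_general x y θ hy hyx hx
end

section
/- Let m ≥ 2 be an integer and let q be a real number with 0 < q < 1. Define ε = min{ (1−q)/(3000·q·m), 1/1000, (1 − (1/5)^{1/m})/2, 1 − (1 − (1−q)^m/300)^{1/m} }. Then ε > 0, and 3·(1 − (1−ε)^m) + 0.3·m·(1−2ε)^{m−1}·(1−q)^{m−1}·q·ε − 0.1·(1−q)^m·(1−2ε)^m < 0. (This inequality is the analytic core of the impossibility theorem that for any number of bidders n = m+1 > 2 and any q < 1, there exists a per-item value distribution under which truthful bidding in VCG is not a Bayesian Nash equilibrium, i.e., the global granularity threshold equals 1 for n > 2.) -/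
open Real

/-!
Write `P = (1 - q) ^ m`. Three of the caps on `ε` each control one term: the last one forces
`(1 - ε) ^ m ≥ 1 - P / 300`, so the first term is at most `P / 100`; the first one forces
`m q ε ≤ (1 - q) / 3000`, so the middle term is at most `P / 10000`; the third one forces
`(1 - 2ε) ^ m ≥ 1 / 5`, so the subtracted term is at least `P / 50`. Since `P > 0`, the sum is
negative.
-/

lemma le_pow_of_rpow_one_div_le {a y : ℝ} {n : ℕ} (ha : 0 ≤ a) (hn : n ≠ 0)
    (h : a ^ ((1 : ℝ) / n) ≤ y) : a ≤ y ^ n :=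
  calc a = (a ^ ((1 : ℝ) / n)) ^ n := by rw [one_div, rpow_inv_natCast_pow ha hn]
    _ ≤ y ^ n := pow_le_pow_left₀ (rpow_nonneg ha _) h n

lemma pow_pred_mul_pow_pred_mul_le {w x c k : ℝ} {n : ℕ} (hn : n ≠ 0) (hw0 : 0 ≤ w)
    (hw1 : w ≤ 1) (hx : 0 ≤ x) (hc0 : 0 ≤ c) (hc : c ≤ k * x) :
    w ^ (n - 1) * x ^ (n - 1) * c ≤ k * x ^ n :=
  calc w ^ (n - 1) * x ^ (n - 1) * c ≤ 1 * x ^ (n - 1) * (k * x) := by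
        gcongr
        exact pow_le_one₀ hw0 hw1
    _ = k * x ^ n := by rw [← pow_sub_one_mul hn x]; ring

theorem stmt_6 (m : ℕ) (hm : 2 ≤ m) (q : ℝ) (hq0 : 0 < q) (hq1 : q < 1) :
    let ε : ℝ := min (min ((1 - q) / (3000 * q * m)) (1 / 1000))
      (min ((1 - (1 / 5 : ℝ) ^ ((1 : ℝ) / m)) / 2)
        (1 - (1 - (1 - q) ^ m / 300) ^ ((1 : ℝ) / m)))
    0 < ε ∧
      3 * (1 - (1 - ε) ^ m) + 0.3 * m * (1 - 2 * ε) ^ (m - 1) * (1 - q) ^ (m - 1) * q * ε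
        - 0.1 * (1 - q) ^ m * (1 - 2 * ε) ^ m < 0 := by
  intro ε
  have hm0 : m ≠ 0 := by omega
  have hx : 0 < 1 - q := by linarith
  have hP0 : 0 < (1 - q) ^ m := pow_pos hx m
  have hP1 : (1 - q) ^ m ≤ 1 := pow_le_one₀ hx.le (by linarith)
  have hroot5 : (1 / 5 : ℝ) ^ ((1 : ℝ) / m) < 1 :=
    rpow_lt_one (by norm_num) (by norm_num) (by positivity)
  have hroot5_nonneg : 0 ≤ (1 / 5 : ℝ) ^ ((1 : ℝ) / m) := by positivity
  have hrootP : (1 - (1 - q) ^ m / 300) ^ ((1 : ℝ) / m) < 1 :=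
    rpow_lt_one (by linarith) (by linarith) (by positivity)
  have hε0 : 0 < ε :=
    lt_min (lt_min (div_pos hx (by positivity)) (by norm_num)) (lt_min (by linarith) (by linarith))
  have hεq : ε ≤ (1 - q) / (3000 * q * m) := (min_le_left _ _).trans (min_le_left _ _)
  have hε5 : ε ≤ (1 - (1 / 5 : ℝ) ^ ((1 : ℝ) / m)) / 2 := (min_le_right _ _).trans (min_le_left _ _)
  have hεP : ε ≤ 1 - (1 - (1 - q) ^ m / 300) ^ ((1 : ℝ) / m) :=
    (min_le_right _ _).trans (min_le_right _ _)
  have hA : 1 - (1 - q) ^ m / 300 ≤ (1 - ε) ^ m :=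
    le_pow_of_rpow_one_div_le (by linarith) hm0 (by linarith)
  have hC : 1 / 5 ≤ (1 - 2 * ε) ^ m := le_pow_of_rpow_one_div_le (by norm_num) hm0 (by linarith)
  have hmqε : m * q * ε ≤ 1 / 3000 * (1 - q) := by
    rw [le_div_iff₀ (by positivity)] at hεq
    linarith
  have hB : (1 - 2 * ε) ^ (m - 1) * (1 - q) ^ (m - 1) * (m * q * ε) ≤ 1 / 3000 * (1 - q) ^ m :=
    pow_pred_mul_pow_pred_mul_le hm0 (by linarith) (by linarith) hx.le
      (by positivity) hmqε
  refine ⟨hε0, ?_⟩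
  linarith [mul_le_mul_of_nonneg_left hC hP0.le]
end

section
/- Let n be a natural number and let a : ℕ → ℝ satisfy a(k) ≤ a(k+1) for all k < n. Then for all real numbers q, q' with 0 ≤ q ≤ q' ≤ 1, ∑_{k=0}^{n} C(n,k)·q^k·(1−q)^{n−k}·a(k) ≤ ∑_{k=0}^{n} C(n,k)·q'^k·(1−q')^{n−k}·a(k). In other words, if the sequence a is nondecreasing, then the expectation of a under the Binomial(n,q) distribution is nondecreasing in q. -/
/-!
Conditioning on one of `n + 1` Bernoulli trials turns the `Binomial(n + 1, q)`-expectation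
of `a` into the `Binomial(n, q)`-expectation of `(1 - q) • a + q • a(· + 1)`. This smoothed
sequence is again nondecreasing and grows with `q`, so monotonicity in `q` follows by induction
on `n`.
-/

open Finset

def binomialExpectation {R : Type*} [CommRing R] (n : ℕ) (q : R) (a : ℕ → R) : R :=
  ∑ k ∈ range (n + 1), (n.choose k : R) * q ^ k * (1 - q) ^ (n - k) * a k

section

variable {R : Type*} [CommRing R]

theorem binomialExpectation_succ (n : ℕ) (q : R) (a : ℕ → R) :
    binomialExpectation (n + 1) q a =
      binomialExpectation n q (fun k => (1 - q) * a k + q * a (k + 1)) := by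
  unfold binomialExpectation
  simp only [mul_assoc]
  rw [sum_choose_succ_mul (fun i j => q ^ i * ((1 - q) ^ j * a i)), ← sum_add_distrib]
  refine sum_congr rfl fun k hk => ?_
  rw [Nat.sub_add_comm (Nat.le_of_lt_succ (mem_range.mp hk))]
  ring

end

section

variable {R : Type*} [CommRing R] [LinearOrder R] [IsStrictOrderedRing R]

theorem binomialExpectation_mono_seq {n : ℕ} {q : R} (hq0 : 0 ≤ q) (hq1 : q ≤ 1)
    {a b : ℕ → R} (hab : ∀ k ≤ n, a k ≤ b k) :
    binomialExpectation n q a ≤ binomialExpectation n q b := by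
  refine sum_le_sum fun k hk => mul_le_mul_of_nonneg_left (hab k (Nat.le_of_lt_succ
    (mem_range.mp hk))) ?_
  have : 0 ≤ 1 - q := sub_nonneg.mpr hq1
  positivity

theorem binomialExpectation_mono_prob (n : ℕ) {a : ℕ → R} (ha : ∀ k < n, a k ≤ a (k + 1))
    {q q' : R} (hq0 : 0 ≤ q) (hqq' : q ≤ q') (hq'1 : q' ≤ 1) :
    binomialExpectation n q a ≤ binomialExpectation n q' a := by
  induction n generalizing a with
  | zero => simp [binomialExpectation]
  | succ n ih =>
    have hq1 : q ≤ 1 := hqq'.trans hq'1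
    have hq'0 : 0 ≤ q' := hq0.trans hqq'
    rw [binomialExpectation_succ, binomialExpectation_succ]
    calc binomialExpectation n q (fun k => (1 - q) * a k + q * a (k + 1))
        ≤ binomialExpectation n q (fun k => (1 - q') * a k + q' * a (k + 1)) := by
          refine binomialExpectation_mono_seq hq0 hq1 fun k hk => ?_
          -- the difference is `(q' - q) * (a (k + 1) - a k)`
          nlinarith [mul_nonneg (sub_nonneg.mpr hqq') (sub_nonneg.mpr (ha k (by omega)))]
      _ ≤ binomialExpectation n q' (fun k => (1 - q') * a k + q' * a (k + 1)) := by
          refine ih (fun k hk => ?_)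
          have h1 : a k ≤ a (k + 1) := ha k (by omega)
          have h2 : a (k + 1) ≤ a (k + 2) := ha (k + 1) (by omega)
          nlinarith [mul_le_mul_of_nonneg_left h1 (sub_nonneg.mpr hq'1),
            mul_le_mul_of_nonneg_left h2 hq'0]

end

theorem stmt_7 (n : ℕ) (a : ℕ → ℝ) (ha : ∀ k < n, a k ≤ a (k + 1))
    (q q' : ℝ) (hq0 : 0 ≤ q) (hqq' : q ≤ q') (hq'1 : q' ≤ 1) :
    ∑ k ∈ Finset.range (n + 1), (n.choose k : ℝ) * q ^ k * (1 - q) ^ (n - k) * a k ≤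
      ∑ k ∈ Finset.range (n + 1), (n.choose k : ℝ) * q' ^ k * (1 - q') ^ (n - k) * a k :=
  binomialExpectation_mono_prob n ha hq0 hqq' hq'1
end

section
/- For all integers m, k with 2 ≤ k ≤ m−1 and all real numbers x, y with 0 ≤ y ≤ x ≤ 1, the inequality (2/(k+1) − 1/k)·y^{k+1}·(x+y)^{m−k} + y^{m+1}·∑_{i=0}^{m−k} C(m−k, i)·(1/(m−i) − 2/(m−i+1)) ≥ 0 holds, where C(m−k,i) is the binomial coefficient. (This expression lower-bounds the difference in expected utilities between truthful bidding and the attack (1,x),(1,y) for a 1-type bidder with value 1 facing k one-item-demand adversaries and m−k two-item-demand adversaries with per-item values uniform on [0,1], so the inequality establishes that this difference is nonnegative.) -/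
/-!
Write `c j = 2/(j+1) - 1/j = (j-1)/(j(j+1))`. On the integers `j ≥ 2` this is antitone
(`c 2 = c 3`, and it decreases afterwards), so every summand `1/(m-i) - 2/(m-i+1) = -c (m-i)`
with `m - i ≥ k` is at least `-c k`, and the binomial sum is at least `-2^(m-k) c k`.
Since `y ≤ x`, `(x+y)^(m-k) ≥ (2y)^(m-k)`, so the first term is at least `2^(m-k) c k y^(m+1)`,
which cancels the lower bound of the second.
-/

open Finset

lemma two_div_add_one_sub_one_div_nonneg {a : ℝ} (ha : 1 ≤ a) : 0 ≤ 2 / (a + 1) - 1 / a := by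
  rw [sub_nonneg, div_le_div_iff₀ (by positivity) (by positivity)]
  linarith

lemma two_div_add_one_sub_one_div_le_of_le {k j : ℕ} (hk : 2 ≤ k) (hkj : k ≤ j) :
    2 / ((j : ℝ) + 1) - 1 / j ≤ 2 / ((k : ℝ) + 1) - 1 / k := by
  have hk' : (2 : ℝ) ≤ k := by exact_mod_cast hk
  have hj : (0 : ℝ) < j := by linarith [(show (k : ℝ) ≤ j by exact_mod_cast hkj)]
  rw [div_sub_div _ _ (by positivity) (by positivity),
    div_sub_div _ _ (by positivity) (by positivity),
    div_le_div_iff₀ (by positivity) (by positivity)]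
  rcases hkj.eq_or_lt with rfl | hlt
  · exact le_rfl
  · have hkj' : (k : ℝ) + 1 ≤ j := by exact_mod_cast hlt
    -- cross-multiplied, this is `(j - k) ((k - 1) j - (k + 1)) ≥ 0`
    nlinarith [mul_nonneg (sub_nonneg.2 hkj')
      (by nlinarith : (0 : ℝ) ≤ ((k : ℝ) - 1) * j - ((k : ℝ) + 1))]

lemma neg_two_pow_mul_le_sum_choose_mul {n k m : ℕ} (hk : 2 ≤ k) (hnkm : n + k ≤ m) :
    -(2 ^ n * (2 / ((k : ℝ) + 1) - 1 / k)) ≤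
      ∑ i ∈ range (n + 1), (n.choose i : ℝ) * (1 / ((m : ℝ) - i) - 2 / ((m : ℝ) - i + 1)) := by
  calc -(2 ^ n * (2 / ((k : ℝ) + 1) - 1 / k))
      = ∑ i ∈ range (n + 1), (n.choose i : ℝ) * -(2 / ((k : ℝ) + 1) - 1 / k) := by
        rw [← sum_mul, ← Nat.cast_sum, Nat.sum_range_choose]
        push_cast
        ring
    _ ≤ _ := by
      refine sum_le_sum fun i hi => mul_le_mul_of_nonneg_left ?_ (Nat.cast_nonneg _)
      have hi : i ≤ n := Nat.lt_succ_iff.1 (mem_range.1 hi)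
      have h := two_div_add_one_sub_one_div_le_of_le hk (show k ≤ m - i by omega)
      rw [Nat.cast_sub (by omega)] at h
      linarith

theorem stmt_12_general (m k : ℕ) (hk : 2 ≤ k) (hkm : k ≤ m - 1)
    (x y : ℝ) (hy : 0 ≤ y) (hyx : y ≤ x) :
    (2 / ((k : ℝ) + 1) - 1 / k) * y ^ (k + 1) * (x + y) ^ (m - k)
      + y ^ (m + 1) *
        ∑ i ∈ Finset.range (m - k + 1),
          ((m - k).choose i : ℝ) * (1 / ((m : ℝ) - i) - 2 / ((m : ℝ) - i + 1)) ≥ 0 := by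
  have hc : 0 ≤ 2 / ((k : ℝ) + 1) - 1 / k :=
    two_div_add_one_sub_one_div_nonneg (by exact_mod_cast (by omega : 1 ≤ k))
  have hsum := neg_two_pow_mul_le_sum_choose_mul (n := m - k) (m := m) hk (by omega)
  have hpow : (2 * y) ^ (m - k) ≤ (x + y) ^ (m - k) :=
    pow_le_pow_left₀ (by linarith) (by linarith) _
  have hy_pow : y ^ (m + 1) = y ^ (k + 1) * y ^ (m - k) := by
    rw [← pow_add]
    congr 1
    omega
  calc (0 : ℝ)
      = (2 / ((k : ℝ) + 1) - 1 / k) * y ^ (k + 1) * (2 * y) ^ (m - k)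
        + y ^ (m + 1) * -(2 ^ (m - k) * (2 / ((k : ℝ) + 1) - 1 / k)) := by
        rw [hy_pow, mul_pow]
        ring
    _ ≤ _ := by gcongr

theorem stmt_12 (m k : ℕ) (hk : 2 ≤ k) (hkm : k ≤ m - 1)
    (x y : ℝ) (hy : 0 ≤ y) (hyx : y ≤ x) (hx : x ≤ 1) :
    (2 / ((k : ℝ) + 1) - 1 / k) * y ^ (k + 1) * (x + y) ^ (m - k)
      + y ^ (m + 1) *
        ∑ i ∈ Finset.range (m - k + 1),
          ((m - k).choose i : ℝ) * (1 / ((m : ℝ) - i) - 2 / ((m : ℝ) - i + 1)) ≥ 0 :=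
  stmt_12_general m k hk hkm x y hy hyx
end

section
/- For all integers m ≥ 2 and all real numbers x, y with 0 ≤ y ≤ x ≤ 1, the following inequality holds: (x+y)·( −2x^{m+1} − 2m(x+1)^m + 2mx(x+1)^m − 4(x+1)^m − 2y^{m+1} + 2(y+1)^{m+1} + 3·2^{m+1} − 3 ) − 2(x+y)^m·( (m−1)x² − x((m−1)²y + m + 1) + y(m(m(−y) + m + y) − 1) ) ≥ 0. (This expression equals (x+y)(m+1)2^m times the combined expected utility difference between truthful bidding and the attack (1,x),(1,y) for a 1-type bidder with value 1 against m adversaries with uniform per-item values, summed over the cases of 0, 1, and m one-item-demand adversaries; its nonnegativity, together with the nonnegativity for intermediate k, yields that the granularity threshold for 1-types under the uniform distribution is at most 1/2.) -/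
/-!
Write `s = x + y`, so that the expression is `s * linCoeff m x y - 2 * s ^ m * powCoeff m x y`;
it suffices that `2 ^ (m + 1) - 3 ≤ linCoeff m x y` and `2 * s ^ m * powCoeff m x y ≤ s * (2 ^ (m + 1) - 3)`.

Both bounds rest on one estimate: for `0 ≤ z ≤ 4` and `t = (2 - z) / 2`, any `p ≤ (1 + t) ^ n` satisfies
`z ^ n * p ≤ 2 ^ n`, because `z * (1 + t) = z * (4 - z) / 2 ≤ 2`. With `p` the first-order Bernoulli
truncation `1 + n t` and `z = 1 + x` it gives `(1 + x) ^ m * (4 + 2 m (1 - x)) ≤ 4 * 2 ^ m`, which together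
with `x ^ (m + 1) ≤ 1` and `1 + y ^ (m + 1) ≤ (1 + y) ^ (m + 1)` bounds `linCoeff`. For `m ≥ 4`,
`powCoeff m x y` is at most `7 / 4` times the second-order truncation `1 + n t + (n choose 2) t ^ 2` at
`n = m - 1`, `z = s`, whence `s ^ (m - 1) * powCoeff m x y ≤ 7 / 8 * 2 ^ m`; the cases `m = 2, 3` are direct.
-/

def linCoeff (m : ℕ) (x y : ℝ) : ℝ :=
  -2 * x ^ (m + 1) - 2 * m * (x + 1) ^ m + 2 * m * x * (x + 1) ^ m
    - 4 * (x + 1) ^ m - 2 * y ^ (m + 1) + 2 * (y + 1) ^ (m + 1)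
    + 3 * 2 ^ (m + 1) - 3

def powCoeff (m : ℕ) (x y : ℝ) : ℝ :=
  ((m : ℝ) - 1) * x ^ 2 - x * (((m : ℝ) - 1) ^ 2 * y + m + 1)
    + y * ((m : ℝ) * ((m : ℝ) * (-y) + m + y) - 1)

lemma one_add_mul_add_choose_two_mul_sq_le_pow {t : ℝ} (ht : 0 ≤ t) (n : ℕ) :
    1 + n * t + n.choose 2 * t ^ 2 ≤ (1 + t) ^ n := by
  induction n with
  | zero => simp
  | succ k ih =>
    have hcast : ((k + 1).choose 2 : ℝ) = k.choose 2 + k := by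
      rw [Nat.choose_succ_succ, Nat.choose_one_right, Nat.cast_add, add_comm]
    calc 1 + ((k + 1 : ℕ) : ℝ) * t + ((k + 1).choose 2 : ℝ) * t ^ 2
        ≤ (1 + t) * (1 + k * t + k.choose 2 * t ^ 2) := by
          rw [hcast]; push_cast; nlinarith [pow_nonneg ht 3, Nat.cast_nonneg (α := ℝ) (k.choose 2)]
      _ ≤ (1 + t) * (1 + t) ^ k := by gcongr
      _ = (1 + t) ^ (k + 1) := by ring

lemma pow_mul_le_two_pow {z p : ℝ} (n : ℕ) (hz0 : 0 ≤ z) (hz4 : z ≤ 4)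
    (hp : p ≤ (1 + (2 - z) / 2) ^ n) : z ^ n * p ≤ 2 ^ n :=
  calc z ^ n * p ≤ z ^ n * (1 + (2 - z) / 2) ^ n := by gcongr
    _ = (z * (1 + (2 - z) / 2)) ^ n := (mul_pow ..).symm
    _ ≤ 2 ^ n := pow_le_pow_left₀ (by nlinarith) (by nlinarith [sq_nonneg (z - 2)]) n

lemma linCoeff_ge {x y : ℝ} (m : ℕ) (hy : 0 ≤ y) (hx0 : 0 ≤ x) (hx : x ≤ 1) :
    2 ^ (m + 1) - 3 ≤ linCoeff m x y := by
  have hxpow : x ^ (m + 1) ≤ 1 := pow_le_one₀ hx0 hx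
  have hypow : 1 ^ (m + 1) + y ^ (m + 1) ≤ (1 + y) ^ (m + 1) :=
    pow_add_pow_le zero_le_one hy m.succ_ne_zero
  have hbern : (x + 1) ^ m * (1 + m * ((2 - (x + 1)) / 2)) ≤ 2 ^ m :=
    pow_mul_le_two_pow m (by linarith) (by linarith) (one_add_mul_le_pow (by linarith) m)
  unfold linCoeff
  linear_combination 2 * hxpow + 2 * hypow + 4 * hbern

lemma powCoeff_two_nonpos {x y : ℝ} (hy : 0 ≤ y) (hyx : y ≤ x) (hx : x ≤ 1) :
    powCoeff 2 x y ≤ 0 := by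
  unfold powCoeff; push_cast
  nlinarith [mul_nonneg (sub_nonneg.2 hyx) (by linarith : (0:ℝ) ≤ 3 - x - 2 * y),
    mul_nonneg (hy.trans hyx) hy]

lemma powCoeff_three_le {x y : ℝ} (hy : 0 ≤ y) (hyx : y ≤ x) (hx : x ≤ 1) :
    powCoeff 3 x y ≤ 13 / 8 := by
  unfold powCoeff; push_cast
  nlinarith [sq_nonneg (x - y), sq_nonneg (x + y - 1), mul_nonneg hy (sub_nonneg.2 hyx)]

lemma powCoeff_le_choose_two {x y : ℝ} (n : ℕ) (hn : 1 ≤ n) (hy : 0 ≤ y) (hyx : y ≤ x)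
    (hx : x ≤ 1) :
    4 * powCoeff (n + 1) x y ≤
      7 * (1 + n * ((2 - (x + y)) / 2) + n.choose 2 * ((2 - (x + y)) / 2) ^ 2) := by
  have hC2 : 0 ≤ 28 - 60 * y + 39 * y ^ 2 - 28 * x + 46 * x * y + 7 * x ^ 2 := by
    nlinarith [sq_nonneg (x + y - 1), sq_nonneg (x - y), mul_nonneg hy (sub_nonneg.2 hyx),
      sq_nonneg (1 - x), sq_nonneg y, mul_nonneg hy (by linarith : (0:ℝ) ≤ 1 - x)]
  have hC1 : 0 ≤ 84 - 184 * y + 103 * y ^ 2 - 24 * x + 78 * x * y - 25 * x ^ 2 := by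
    nlinarith [sq_nonneg (x + y - 1), sq_nonneg (x - y), mul_nonneg hy (sub_nonneg.2 hyx),
      sq_nonneg (1 - x), mul_nonneg hy (by linarith : (0:ℝ) ≤ 1 - x)]
  have hC0 : 0 ≤ 112 - 124 * y + 64 * y ^ 2 + 68 * x + 32 * x * y - 32 * x ^ 2 := by
    nlinarith [sq_nonneg (x + y - 1), mul_nonneg hy (sub_nonneg.2 hyx), sq_nonneg (1 - x),
      mul_nonneg (hy.trans hyx) (by linarith : (0:ℝ) ≤ 1 - x)]
  obtain ⟨N, rfl⟩ : ∃ N, n = N + 1 := ⟨n - 1, by omega⟩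
  have hN : (0 : ℝ) ≤ N := N.cast_nonneg
  unfold powCoeff
  rw [Nat.cast_choose_two]; push_cast
  linear_combination (mul_nonneg (mul_nonneg hN hN) hC2 + mul_nonneg hN hC1 + hC0) / 8

lemma two_mul_pow_mul_powCoeff_le {x y : ℝ} (m : ℕ) (hm : 2 ≤ m) (hy : 0 ≤ y) (hyx : y ≤ x)
    (hx : x ≤ 1) :
    2 * (x + y) ^ m * powCoeff m x y ≤ (x + y) * (2 ^ (m + 1) - 3) := by
  have hs0 : 0 ≤ x + y := by linarith
  have hs2 : x + y ≤ 2 := by linarith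
  obtain rfl | rfl | hm4 : m = 2 ∨ m = 3 ∨ 4 ≤ m := by omega
  · have hG := mul_nonpos_of_nonneg_of_nonpos (by positivity : (0 : ℝ) ≤ 2 * (x + y) ^ 2)
      (powCoeff_two_nonpos hy hyx hx)
    norm_num
    linarith
  · have hsq : (x + y) ^ 2 ≤ 4 := by nlinarith
    have hG := mul_le_mul_of_nonneg_left (powCoeff_three_le hy hyx hx) (pow_nonneg hs0 2)
    norm_num
    linear_combination 2 * mul_le_mul_of_nonneg_left hG hs0
      + 13 / 4 * mul_le_mul_of_nonneg_left hsq hs0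
  · obtain ⟨n, rfl⟩ : ∃ n, m = n + 1 := ⟨m - 1, by omega⟩
    have hG := powCoeff_le_choose_two n (by omega) hy hyx hx
    set s := x + y
    set t := (2 - s) / 2
    have hP : s ^ n * (1 + n * t + n.choose 2 * t ^ 2) ≤ 2 ^ n :=
      pow_mul_le_two_pow n hs0 (by linarith)
        (one_add_mul_add_choose_two_mul_sq_le_pow (by simp only [t]; linarith) n)
    have h8 : (8 : ℝ) ≤ 2 ^ n :=
      calc (8 : ℝ) = 2 ^ 3 := by norm_num
        _ ≤ 2 ^ n := pow_le_pow_right₀ (by norm_num) (by omega)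
    calc 2 * s ^ (n + 1) * powCoeff (n + 1) x y
        = s / 2 * (s ^ n * (4 * powCoeff (n + 1) x y)) := by ring
      _ ≤ s / 2 * (7 * (s ^ n * (1 + n * t + n.choose 2 * t ^ 2))) := by
          refine mul_le_mul_of_nonneg_left ?_ (by linarith)
          exact (mul_le_mul_of_nonneg_left hG (pow_nonneg hs0 n)).trans_eq (by ring)
      _ ≤ s / 2 * (7 * 2 ^ n) := by gcongr
      _ ≤ s * (2 ^ (n + 1 + 1) - 3) := by rw [pow_succ, pow_succ]; nlinarith

theorem stmt_14 (m : ℕ) (hm : 2 ≤ m) (x y : ℝ) (hy : 0 ≤ y) (hyx : y ≤ x) (hx : x ≤ 1) :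
    (x + y) *
        (-2 * x ^ (m + 1) - 2 * m * (x + 1) ^ m + 2 * m * x * (x + 1) ^ m
          - 4 * (x + 1) ^ m - 2 * y ^ (m + 1) + 2 * (y + 1) ^ (m + 1)
          + 3 * 2 ^ (m + 1) - 3)
      - 2 * (x + y) ^ m *
        (((m : ℝ) - 1) * x ^ 2 - x * (((m : ℝ) - 1) ^ 2 * y + m + 1)
          + y * ((m : ℝ) * ((m : ℝ) * (-y) + m + y) - 1)) ≥ 0 := by
  have hA := mul_le_mul_of_nonneg_left (linCoeff_ge m hy (hy.trans hyx) hx)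
    (by linarith : 0 ≤ x + y)
  have hG := two_mul_pow_mul_powCoeff_le m hm hy hyx hx
  unfold linCoeff powCoeff at *
  linarith
end

section
/- For all integers m ≥ 1 and all real numbers x, y with 0 ≤ x ≤ 1 and 0 ≤ y ≤ 1, the inequality −2x^{m+1} − 2m(x+1)^m + 2mx(x+1)^m − 4(x+1)^m − 2y^{m+1} + 2(y+1)^{m+1} + 3·2^{m+1} − 3 ≥ 2^{m−1} − 7 holds. -/
/-! With `t = x + 1`, the terms in `(x + 1) ^ m` add up to `-2 f_m(t)`, where
`f_m(t) := 2 (m + 1) t ^ m - m t ^ (m + 1)` is at most `2 ^ (m + 1)` for `t ≥ 0`, by induction from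
`f_(m+1)(t) = 2 f_m(t) - (m + 1) t ^ m (t - 2) ^ 2`.
Together with `x ^ (m + 1) ≤ 1` and `y ^ (m + 1) + 1 ≤ (y + 1) ^ (m + 1)`, the left side is at least
`2 ^ (m + 1) - 3`. -/

theorem two_mul_succ_mul_pow_sub_mul_pow_succ_le (m : ℕ) {t : ℝ} (ht : 0 ≤ t) :
    2 * (m + 1) * t ^ m - m * t ^ (m + 1) ≤ 2 ^ (m + 1) := by
  induction m with
  | zero => norm_num
  | succ n ih =>
    have hstep : 2 * ((n + 1 : ℕ) + 1) * t ^ (n + 1) - (n + 1 : ℕ) * t ^ (n + 1 + 1)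
        = 2 * (2 * (n + 1) * t ^ n - n * t ^ (n + 1)) - (n + 1) * t ^ n * (t - 2) ^ 2 := by
      push_cast; ring
    have hdefect : 0 ≤ ((n : ℝ) + 1) * t ^ n * (t - 2) ^ 2 := by positivity
    rw [hstep, pow_succ 2 (n + 1)]
    linarith

theorem stmt_15_general (m : ℕ) (x y : ℝ) (hx0 : 0 ≤ x) (hx1 : x ≤ 1)
    (hy0 : 0 ≤ y) :
    -2 * x ^ (m + 1) - 2 * m * (x + 1) ^ m + 2 * m * x * (x + 1) ^ m
        - 4 * (x + 1) ^ m - 2 * y ^ (m + 1) + 2 * (y + 1) ^ (m + 1)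
        + 3 * 2 ^ (m + 1) - 3 ≥ (2 : ℝ) ^ (m - 1) - 7 := by
  have hpoly := two_mul_succ_mul_pow_sub_mul_pow_succ_le m (t := x + 1) (by linarith)
  have hx : x ^ (m + 1) ≤ 1 := pow_le_one₀ hx0 hx1
  have hy : y ^ (m + 1) + 1 ≤ (y + 1) ^ (m + 1) := by
    simpa using pow_add_pow_le hy0 zero_le_one (Nat.succ_ne_zero m)
  have hpow : (2 : ℝ) ^ (m - 1) ≤ 2 ^ (m + 1) := pow_le_pow_right₀ one_le_two (by omega)
  linear_combination 2 * hpoly + 2 * hx + 2 * hy + hpow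

theorem stmt_15 (m : ℕ) (hm : 1 ≤ m) (x y : ℝ) (hx0 : 0 ≤ x) (hx1 : x ≤ 1)
    (hy0 : 0 ≤ y) (hy1 : y ≤ 1) :
    -2 * x ^ (m + 1) - 2 * m * (x + 1) ^ m + 2 * m * x * (x + 1) ^ m
        - 4 * (x + 1) ^ m - 2 * y ^ (m + 1) + 2 * (y + 1) ^ (m + 1)
        + 3 * 2 ^ (m + 1) - 3 ≥ (2 : ℝ) ^ (m - 1) - 7 :=
  stmt_15_general m x y hx0 hx1 hy0
end

section
/- Let θ, x, v₁, v₂, w be real numbers with 0 ≤ θ ≤ x ≤ 1, 0 ≤ v₂ ≤ v₁ ≤ 1 and 0 ≤ w. Define, for a real number c, T(c) = c − v₂ if w ≤ (v₁+v₂)/2; T(c) = c − 2w + v₁ if (v₁+v₂)/2 < w ≤ (v₁+c)/2; and T(c) = 0 otherwise. Then T(x) − T(θ) ≤ x − θ. -/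
/-! The payment `c - T c` equals `v₂` or `min c (2 * w - v₁)`, so it is monotone in `c`. -/

noncomputable def vcgUtility (v₁ v₂ w c : ℝ) : ℝ :=
  if w ≤ (v₁ + v₂) / 2 then c - v₂
  else if w ≤ (v₁ + c) / 2 then c - 2 * w + v₁
  else 0

theorem sub_vcgUtility (v₁ v₂ w c : ℝ) :
    c - vcgUtility v₁ v₂ w c = if w ≤ (v₁ + v₂) / 2 then v₂ else min c (2 * w - v₁) := by
  unfold vcgUtility
  split_ifs with hlow hmid
  · ring
  · rw [min_eq_right (by linarith)]; ring
  · rw [min_eq_left (by linarith)]; ring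

theorem monotone_sub_vcgUtility (v₁ v₂ w : ℝ) : Monotone fun c => c - vcgUtility v₁ v₂ w c := by
  intro a b hab
  simp only [sub_vcgUtility]
  split_ifs
  · exact le_rfl
  · exact min_le_min_right _ hab

theorem stmt_19_general (θ x v₁ v₂ w : ℝ) (hθx : θ ≤ x) :
    let T : ℝ → ℝ := fun c =>
      if w ≤ (v₁ + v₂) / 2 then c - v₂
      else if w ≤ (v₁ + c) / 2 then c - 2 * w + v₁
      else 0
    T x - T θ ≤ x - θ := by
  intro T
  have hpay : θ - T θ ≤ x - T x := monotone_sub_vcgUtility v₁ v₂ w hθx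
  linarith

theorem stmt_19 (θ x v₁ v₂ w : ℝ) (hθ0 : 0 ≤ θ) (hθx : θ ≤ x) (hx : x ≤ 1)
    (hv2 : 0 ≤ v₂) (hv21 : v₂ ≤ v₁) (hv1 : v₁ ≤ 1) (hw : 0 ≤ w) :
    let T : ℝ → ℝ := fun c =>
      if w ≤ (v₁ + v₂) / 2 then c - v₂
      else if w ≤ (v₁ + c) / 2 then c - 2 * w + v₁
      else 0
    T x - T θ ≤ x - θ :=
  stmt_19_general θ x v₁ v₂ w hθx
end
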